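/- arXiv:1811.10995 — 3 statements merged into one kernel-verified Lean document; each statement's English description precedes it below -/
import Mathlib

section
/- The staging transformation u_1 = q_1, u_k = q_k - ((k-1)q_{k+1} + q_1)/k for k = 2,...,N (with q_{N+1} = q_1) is a linear bijection on ℝ^N with inverse given by q_1 = u_1 and q_k = u_1 + Σ_{k'=k}^{N} ((k-1)/(k'-1)) u_{k'} for k = 2,...,N. -/
/-- The staging transformation: `u_1 = q_1`,
`u_k = q_k - ((k-1) q_{k+1} + q_1)/k` for `k = 2, …, N`, with `q_{N+1} = q_1`.
Indices `k = 1, …, N` are represented by `i : Fin N` with `k = i + 1`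
(`Fin` addition wraps, realizing the convention `q_{N+1} = q_1`). -/
noncomputable def stagingT (N : ℕ) [NeZero N] (q : Fin N → ℝ) : Fin N → ℝ :=
  fun i =>
    if i.val = 0 then q 0
    else q i - ((i.val : ℝ) * q (i + 1) + q 0) / ((i.val : ℝ) + 1)

/-- The claimed inverse: `q_1 = u_1`,
`q_k = u_1 + ∑_{k'=k}^N ((k-1)/(k'-1)) u_{k'}` for `k = 2, …, N`. -/
noncomputable def stagingS (N : ℕ) [NeZero N] (u : Fin N → ℝ) : Fin N → ℝ :=
  fun i =>
    if i.val = 0 then u 0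
    else u 0 + ∑ j ∈ Finset.univ.filter (fun j : Fin N => i.val ≤ j.val),
      ((i.val : ℝ) / (j.val : ℝ)) * u j

/-! Write `D m = (q_m - q_1) / m` for the displacement of the `m`-th coordinate from the first
one, scaled by its index (`m = k - 1` in the paper's numbering). Then `u_k = m (D m - D (m + 1))` with
`D N = 0`, so `u_k / m` is a difference sequence of `D`: summing it from `m` to `N - 1`
telescopes to `D m`, which is exactly the inverse formula. -/

open Finset Fin.NatCast

lemma sum_filter_le_val_eq_sum_Ico {M : Type*} [AddCommMonoid M] (N : ℕ) [NeZero N] (a : ℕ)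
    (g : Fin N → M) :
    ∑ j ∈ univ.filter (fun j : Fin N => a ≤ j.val), g j = ∑ m ∈ Ico a N, g (m : Fin N) := by
  have h := Fin.sum_univ_eq_sum_range (fun m => if a ≤ m then g (m : Fin N) else 0) N
  simp only [Fin.cast_val_eq_self] at h
  rw [sum_filter, h, ← sum_filter]
  congr 1
  ext m
  simp [and_comm]

lemma sum_Ico_sub_succ {G : Type*} [AddCommGroup G] (f : ℕ → G) {m n : ℕ} (h : m ≤ n) :
    ∑ k ∈ Ico m n, (f k - f (k + 1)) = f m - f n := by
  rw [← neg_sub (f n), ← sum_Ico_sub f h, ← sum_neg_distrib]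
  simp only [neg_sub]

section

variable {N : ℕ} [NeZero N]

/-- The index `m` is read modulo `N`, so `scaledDisp q N = 0` encodes `q_{N+1} = q_1`. -/
noncomputable def scaledDisp (q : Fin N → ℝ) (m : ℕ) : ℝ := (q (m : Fin N) - q 0) / m

lemma scaledDisp_self (q : Fin N → ℝ) : scaledDisp q N = 0 := by
  simp [scaledDisp]

lemma natCast_mul_scaledDisp (q : Fin N → ℝ) {m : ℕ} (hm : m ≠ 0) :
    m * scaledDisp q m = q (m : Fin N) - q 0 := by
  have : (m : ℝ) ≠ 0 := Nat.cast_ne_zero.mpr hm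
  rw [scaledDisp, mul_div_cancel₀ _ this]

lemma stagingT_natCast (q : Fin N → ℝ) {m : ℕ} (hm0 : m ≠ 0) (hmN : m < N) :
    stagingT N q (m : Fin N) = m * (scaledDisp q m - scaledDisp q (m + 1)) := by
  have hm : (m : ℝ) ≠ 0 := Nat.cast_ne_zero.mpr hm0
  simp only [stagingT, Fin.val_cast_of_lt hmN, hm0, if_false, scaledDisp]
  push_cast
  field_simp
  ring

lemma stagingS_natCast (u : Fin N → ℝ) {m : ℕ} (hm0 : m ≠ 0) (hmN : m < N) :
    stagingS N u (m : Fin N) = u 0 + ∑ k ∈ Ico m N, (m / k : ℝ) * u (k : Fin N) := by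
  rw [stagingS, if_neg (by rwa [Fin.val_cast_of_lt hmN]), Fin.val_cast_of_lt hmN,
    sum_filter_le_val_eq_sum_Ico N m (fun j => (m / j.val : ℝ) * u j)]
  refine congrArg _ (sum_congr rfl fun k hk => ?_)
  rw [Fin.val_cast_of_lt (mem_Ico.mp hk).2]

lemma stagingT_zero (q : Fin N → ℝ) : stagingT N q 0 = q 0 := by
  simp [stagingT]

lemma stagingS_zero (u : Fin N → ℝ) : stagingS N u 0 = u 0 := by
  simp [stagingS]

theorem stagingS_stagingT (q : Fin N → ℝ) : stagingS N (stagingT N q) = q := by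
  funext i
  obtain ⟨m, hmN, rfl⟩ : ∃ m < N, (m : Fin N) = i := ⟨i, i.isLt, Fin.cast_val_eq_self i⟩
  rcases eq_or_ne m 0 with rfl | hm0
  · simp [stagingS_zero, stagingT_zero]
  have hsum : ∑ k ∈ Ico m N, (m / k : ℝ) * stagingT N q k = m * scaledDisp q m :=
    calc ∑ k ∈ Ico m N, (m / k : ℝ) * stagingT N q k
        = m * ∑ k ∈ Ico m N, (scaledDisp q k - scaledDisp q (k + 1)) := by
          rw [mul_sum]
          refine sum_congr rfl fun k hk => ?_
          obtain ⟨hmk, hkN⟩ := mem_Ico.mp hk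
          have hk0 : k ≠ 0 := by omega
          rw [stagingT_natCast q hk0 hkN]
          field_simp
      _ = m * scaledDisp q m := by
          rw [sum_Ico_sub_succ _ hmN.le, scaledDisp_self, sub_zero]
  rw [stagingS_natCast _ hm0 hmN, hsum, natCast_mul_scaledDisp q hm0, stagingT_zero,
    add_sub_cancel]

lemma scaledDisp_stagingS (u : Fin N → ℝ) {m : ℕ} (hm0 : m ≠ 0) (hmN : m ≤ N) :
    scaledDisp (stagingS N u) m = ∑ k ∈ Ico m N, u (k : Fin N) / k := by
  rcases hmN.lt_or_eq with hmN | rfl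
  · have hm : (m : ℝ) ≠ 0 := Nat.cast_ne_zero.mpr hm0
    rw [scaledDisp, stagingS_natCast u hm0 hmN, stagingS_zero, add_sub_cancel_left, sum_div]
    refine sum_congr rfl fun k _ => ?_
    field_simp
  · rw [scaledDisp_self, Ico_self, sum_empty]

theorem stagingT_stagingS (u : Fin N → ℝ) : stagingT N (stagingS N u) = u := by
  funext i
  obtain ⟨m, hmN, rfl⟩ : ∃ m < N, (m : Fin N) = i := ⟨i, i.isLt, Fin.cast_val_eq_self i⟩
  rcases eq_or_ne m 0 with rfl | hm0
  · simp [stagingS_zero, stagingT_zero]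
  have hm : (m : ℝ) ≠ 0 := Nat.cast_ne_zero.mpr hm0
  rw [stagingT_natCast _ hm0 hmN, scaledDisp_stagingS u hm0 hmN.le,
    scaledDisp_stagingS u m.succ_ne_zero hmN, sum_eq_sum_Ico_succ_bot hmN, add_sub_cancel_right,
    mul_div_cancel₀ _ hm]

end

theorem stmt4_general (N : ℕ) [NeZero N] :
    Function.Bijective (stagingT N) ∧
    (∀ q : Fin N → ℝ, stagingS N (stagingT N q) = q) ∧
    (∀ u : Fin N → ℝ, stagingT N (stagingS N u) = u) := by
  exact ⟨Function.bijective_iff_has_inverse.mpr ⟨stagingS N, stagingS_stagingT, stagingT_stagingS⟩,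
    stagingS_stagingT, stagingT_stagingS⟩

/-- The staging transformation is a linear bijection of `ℝ^N`, with the explicit
inverse given by `stagingS`. -/
theorem stmt4 (N : ℕ) [NeZero N] (hN : 2 ≤ N) :
    Function.Bijective (stagingT N) ∧
    (∀ q : Fin N → ℝ, stagingS N (stagingT N q) = q) ∧
    (∀ u : Fin N → ℝ, stagingT N (stagingS N u) = u) :=
  stmt4_general N
end

section
/- Under the staging transformation, the ring polymer spring potential diagonalizes: Σ_{i=1}^{N} (q_i - q_{i+1})²/2 = Σ_{k=2}^{N} (m_k/2) u_k² with m_k = k/(k-1), where u is the image of q under the staging map and q_{N+1} = q_1. -/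
/-!
With `g_k = q_k - q_1` one has `g_1 = g_{N+1} = 0` and `u_k = g_k - (k-1) g_{k+1}/k`. Completing the
square with `(a - x)² + x²/(k-1) = (k/(k-1)) (x - (k-1) a/k)² + a²/k` (for `x = g_k`, `a = g_{k+1}`)
trades the remainder `g_k²/(2(k-1))` plus the spring `(g_k - g_{k+1})²/2` for the `k`-th staging term
plus the remainder `g_{k+1}²/(2k)`; at `k = N` the remainder vanishes.
-/

open Fin.NatCast

-- `u_{j+1}` for `q_k = f (k - 1)`, without the periodic wrap-around.
def stagingCoord {K : Type*} [Field K] (f : ℕ → K) (j : ℕ) : K :=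
  f j - (j * f (j + 1) + f 0) / (j + 1)

theorem sum_sq_sub_succ_eq_sum_stagingCoord {K : Type*} [Field K] [CharZero K] (f : ℕ → K)
    {n : ℕ} (hn : 1 ≤ n) :
    ∑ j ∈ Finset.range n, (f j - f (j + 1)) ^ 2 / 2 =
      ∑ j ∈ Finset.Ico 1 n, ((j : K) + 1) / j / 2 * stagingCoord f j ^ 2 +
        (f n - f 0) ^ 2 / (2 * n) := by
  induction n, hn using Nat.le_induction with
  | base =>
    simp only [Finset.range_one, Finset.sum_singleton, Finset.Ico_self, Finset.sum_empty,
      zero_add, Nat.cast_one, mul_one]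
    ring
  | succ n hn ih =>
    rw [Finset.sum_range_succ, ih, Finset.sum_Ico_succ_top hn, add_assoc, add_assoc,
      stagingCoord]
    congr 1
    have hn0 : (n : K) ≠ 0 := Nat.cast_ne_zero.mpr (by omega)
    have hn1 : (n : K) + 1 ≠ 0 := by exact_mod_cast n.succ_ne_zero
    push_cast
    field_simp
    ring

theorem stagingT_eq_stagingCoord {N : ℕ} [NeZero N] (q : Fin N → ℝ) {i : Fin N} (hi : i.val ≠ 0) :
    stagingT N q i = stagingCoord (fun j : ℕ => q j) i.val := by
  simp [stagingT, stagingCoord, hi, Fin.cast_val_eq_self]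

theorem stmt5_general (N : ℕ) [NeZero N] (q : Fin N → ℝ) :
    ∑ i : Fin N, (q i - q (i + 1)) ^ 2 / 2 =
      ∑ i ∈ Finset.univ.filter (fun i : Fin N => 1 ≤ i.val),
        (((i.val : ℝ) + 1) / (i.val : ℝ)) / 2 * (stagingT N q i) ^ 2 := by
  set f : ℕ → ℝ := fun j => q j
  have hf : ∀ i : Fin N, q i = f i.val := fun i => by simp [f, Fin.cast_val_eq_self]
  have hf_succ : ∀ i : Fin N, q (i + 1) = f (i.val + 1) := fun i => by
    simp [f, Fin.cast_val_eq_self]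
  have hf_period : f N = f 0 := by simp [f]
  have hlhs : ∑ i : Fin N, (q i - q (i + 1)) ^ 2 / 2 =
      ∑ j ∈ Finset.range N, (f j - f (j + 1)) ^ 2 / 2 := by
    rw [← Fin.sum_univ_eq_sum_range (fun j => (f j - f (j + 1)) ^ 2 / 2)]
    exact Finset.sum_congr rfl fun i _ => by rw [hf_succ, hf]
  have hrhs : ∑ i ∈ Finset.univ.filter (fun i : Fin N => 1 ≤ i.val),
        (((i.val : ℝ) + 1) / (i.val : ℝ)) / 2 * (stagingT N q i) ^ 2 =
      ∑ j ∈ Finset.Ico 1 N, ((j : ℝ) + 1) / j / 2 * stagingCoord f j ^ 2 := by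
    have hIco : (Finset.range N).filter (1 ≤ ·) = Finset.Ico 1 N := by
      ext j; simp only [Finset.mem_filter, Finset.mem_range, Finset.mem_Ico]; omega
    rw [← hIco, Finset.sum_filter, Finset.sum_filter,
      ← Fin.sum_univ_eq_sum_range (fun j => if 1 ≤ j then _ else 0)]
    refine Finset.sum_congr rfl fun i _ => ?_
    split_ifs with hi
    · rw [stagingT_eq_stagingCoord q (by omega)]
    · rfl
  rw [hlhs, hrhs, sum_sq_sub_succ_eq_sum_stagingCoord f NeZero.one_le, hf_period]
  simp

/-- Under the staging transformation the spring potential diagonalizes: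
`∑_{i=1}^N (q_i - q_{i+1})²/2 = ∑_{k=2}^N (m_k/2) u_k²` with `m_k = k/(k-1)`,
where `u = stagingT N q` and `q_{N+1} = q_1`. -/
theorem stmt5 (N : ℕ) [NeZero N] (hN : 2 ≤ N) (q : Fin N → ℝ) :
    ∑ i : Fin N, (q i - q (i + 1)) ^ 2 / 2 =
      ∑ i ∈ Finset.univ.filter (fun i : Fin N => 1 ≤ i.val),
        (((i.val : ℝ) + 1) / (i.val : ℝ)) / 2 * (stagingT N q i) ^ 2 :=
  stmt5_general N q
end

section
/- Let M, C₁, C₂ be positive definite symmetric N×N matrices with C₂M = MC₂, let L^α be positive definite symmetric, and U: ℝ^N → ℝ smooth. Then the probability density π(q,p) ∝ exp(-β_N(½ q·L^α q + U(q) + ½ p·M^{-1}p)) is a stationary solution of the Fokker–Planck equation ∂_t f + C₁M^{-1}p·∇_q f - C₁(L^α q + ∇U(q))·∇_p f = γ ∇_p·(C₂(p f + (M/β_N) ∇_p f)) associated with the preconditioned Langevin dynamics dq = C₁M^{-1}p dt, dp = -C₁(L^α q + ∇U) dt - γC₂ p dt + √(2γC₂M/β_N) dB. -/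
open Matrix

/-- Gradient of a scalar function on `ℝ^N` (components via directional derivatives). -/
noncomputable def vgrad {N : ℕ} (f : (Fin N → ℝ) → ℝ) (x : Fin N → ℝ) : Fin N → ℝ :=
  fun i => fderiv ℝ f x (Pi.single i 1)

/-- Divergence of a vector field on `ℝ^N`. -/
noncomputable def vdiv {N : ℕ} (F : (Fin N → ℝ) → Fin N → ℝ) (x : Fin N → ℝ) : ℝ :=
  ∑ i, fderiv ℝ (fun y => F y i) x (Pi.single i 1)

/-- The Gibbs density `π(q,p) ∝ exp(-β_N(½ q·L^α q + U(q) + ½ p·M⁻¹p))`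
(unnormalized). -/
noncomputable def gibbsDens {N : ℕ} (βN : ℝ) (Lα M : Matrix (Fin N) (Fin N) ℝ)
    (U : (Fin N → ℝ) → ℝ) (q p : Fin N → ℝ) : ℝ :=
  Real.exp (-βN * ((1 / 2) * (q ⬝ᵥ Lα.mulVec q) + U q + (1 / 2) * (p ⬝ᵥ M⁻¹.mulVec p)))

section helpers
open ContinuousLinearMap
variable {N : ℕ}

/-- Derivative of the quadratic form `y ↦ y ⬝ᵥ A y`. -/
lemma hasFDerivAt_quad (A : Matrix (Fin N) (Fin N) ℝ) (x : Fin N → ℝ) :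
    HasFDerivAt (fun y : Fin N → ℝ => y ⬝ᵥ A.mulVec y)
      (∑ j, (x j • (∑ k, A j k • proj (R := ℝ) (φ := fun _ : Fin N => ℝ) k)
        + A.mulVec x j • proj (R := ℝ) (φ := fun _ : Fin N => ℝ) j)) x := by
  have h1 : ∀ j : Fin N, HasFDerivAt (fun y : Fin N → ℝ => A.mulVec y j)
      (∑ k, A j k • proj (R := ℝ) (φ := fun _ : Fin N => ℝ) k) x := by
    intro j
    have he : (fun y : Fin N → ℝ => A.mulVec y j) = fun y => ∑ k, A j k * y k := by
      funext y; simp [Matrix.mulVec, dotProduct]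
    rw [he]
    exact HasFDerivAt.fun_sum fun k _ => (hasFDerivAt_apply k x).const_mul (A j k)
  have he : (fun y : Fin N → ℝ => y ⬝ᵥ A.mulVec y) = fun y => ∑ j, y j * A.mulVec y j := by
    funext y; simp [dotProduct]
  rw [he]
  exact HasFDerivAt.fun_sum fun j _ => (hasFDerivAt_apply j x).mul (h1 j)

lemma quad_deriv_apply (A : Matrix (Fin N) (Fin N) ℝ) (x : Fin N → ℝ) (i : Fin N) :
    (∑ j, (x j • (∑ k, A j k • proj (R := ℝ) (φ := fun _ : Fin N => ℝ) k)
        + A.mulVec x j • proj (R := ℝ) (φ := fun _ : Fin N => ℝ) j)) (Pi.single i 1)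
      = Aᵀ.mulVec x i + A.mulVec x i := by
  simp [ContinuousLinearMap.sum_apply, Pi.single_apply, Matrix.mulVec, dotProduct,
    Finset.sum_add_distrib, mul_ite, Finset.mul_sum, mul_comm, mul_left_comm]

/-- The momentum gradient of the Gibbs density. -/
lemma vgrad_p (βN : ℝ) (Lα M : Matrix (Fin N) (Fin N) ℝ) (hMi : M⁻¹.IsSymm)
    (U : (Fin N → ℝ) → ℝ) (q p : Fin N → ℝ) :
    vgrad (fun p' => gibbsDens βN Lα M U q p') p
      = (-βN * gibbsDens βN Lα M U q p) • M⁻¹.mulVec p := by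
  set K : ℝ := (1 / 2) * (q ⬝ᵥ Lα.mulVec q) + U q with hK
  have hd := ((((hasFDerivAt_quad M⁻¹ p).const_mul ((1:ℝ)/2)).const_add K).const_mul
    (-βN)).exp
  have heq : (fun p' => gibbsDens βN Lα M U q p')
      = fun p' => Real.exp (-βN * (K + 1 / 2 * (p' ⬝ᵥ M⁻¹.mulVec p'))) := rfl
  funext i
  show fderiv ℝ (fun p' => gibbsDens βN Lα M U q p') p (Pi.single i 1) = _
  rw [heq, hd.fderiv]
  simp only [ContinuousLinearMap.smul_apply, smul_eq_mul, quad_deriv_apply, hMi.eq]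
  have : gibbsDens βN Lα M U q p = Real.exp (-βN * (K + 1 / 2 * (p ⬝ᵥ M⁻¹.mulVec p))) := rfl
  rw [this]
  simp only [Pi.smul_apply, smul_eq_mul]
  ring

/-- The position gradient of the Gibbs density. -/
lemma vgrad_q (βN : ℝ) (Lα M : Matrix (Fin N) (Fin N) ℝ) (hLs : Lα.IsSymm)
    (U : (Fin N → ℝ) → ℝ) (hU : ContDiff ℝ (⊤ : ℕ∞) U) (q p : Fin N → ℝ) :
    vgrad (fun q' => gibbsDens βN Lα M U q' p) q
      = (-βN * gibbsDens βN Lα M U q p) • (Lα.mulVec q + vgrad U q) := by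
  set Kp : ℝ := (1 / 2) * (p ⬝ᵥ M⁻¹.mulVec p) with hKp
  have hUd : HasFDerivAt U (fderiv ℝ U q) q := (hU.differentiable (by simp) q).hasFDerivAt
  have hd := (((((hasFDerivAt_quad Lα q).const_mul ((1:ℝ)/2)).fun_add hUd).add_const
    Kp).const_mul (-βN)).exp
  have heq : (fun q' => gibbsDens βN Lα M U q' p)
      = fun q' => Real.exp (-βN * (1 / 2 * (q' ⬝ᵥ Lα.mulVec q') + U q' + Kp)) := rfl
  funext i
  show fderiv ℝ (fun q' => gibbsDens βN Lα M U q' p) q (Pi.single i 1) = _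
  rw [heq, hd.fderiv]
  simp only [ContinuousLinearMap.smul_apply, ContinuousLinearMap.add_apply, smul_eq_mul,
    quad_deriv_apply, hLs.eq]
  have : gibbsDens βN Lα M U q p = Real.exp (-βN * (1 / 2 * (q ⬝ᵥ Lα.mulVec q) + U q + Kp)) :=
    rfl
  rw [this]
  show _ = -βN * _ * (Lα.mulVec q i + fderiv ℝ U q (Pi.single i 1))
  ring
end helpers

/-- The Gibbs density is a stationary solution of the Fokker–Planck equation of the
preconditioned Langevin dynamics
`dq = C₁M⁻¹p dt, dp = -C₁(L^α q + ∇U) dt - γC₂ p dt + √(2γC₂M/β_N) dB`: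
for all `(q,p)`,
`C₁M⁻¹p·∇_q π - C₁(L^α q + ∇U(q))·∇_p π = γ ∇_p·(C₂(p π + (M/β_N)∇_p π))`,
so the preconditioners `C₁, C₂` do not change the invariant measure. -/
theorem stmt14 {N : ℕ} (βN γ : ℝ) (hβN : 0 < βN) (hγ : 0 < γ)
    (M C₁ C₂ Lα : Matrix (Fin N) (Fin N) ℝ)
    (hM : M.PosDef) (hMs : M.IsSymm)
    (hC₁ : C₁.PosDef) (hC₁s : C₁.IsSymm)
    (hC₂ : C₂.PosDef) (hC₂s : C₂.IsSymm)
    (hcomm : C₂ * M = M * C₂)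
    (hLα : Lα.PosDef) (hLαs : Lα.IsSymm)
    (U : (Fin N → ℝ) → ℝ) (hU : ContDiff ℝ (⊤ : ℕ∞) U) :
    ∀ q p : Fin N → ℝ,
      (C₁.mulVec (M⁻¹.mulVec p)) ⬝ᵥ vgrad (fun q' => gibbsDens βN Lα M U q' p) q -
        (C₁.mulVec (Lα.mulVec q + vgrad U q)) ⬝ᵥ
          vgrad (fun p' => gibbsDens βN Lα M U q p') p =
      γ * vdiv (fun p' =>
        C₂.mulVec (gibbsDens βN Lα M U q p' • p' +
          βN⁻¹ • M.mulVec (vgrad (fun p'' => gibbsDens βN Lα M U q p'') p'))) p := by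
  intro q p
  have hMdet : IsUnit M.det := isUnit_iff_ne_zero.mpr (ne_of_gt hM.det_pos)
  have hMi : M⁻¹.IsSymm := by
    unfold Matrix.IsSymm
    rw [Matrix.transpose_nonsing_inv, hMs.eq]
  -- RHS is zero: the flux vanishes pointwise
  have hflux : (fun p' : Fin N → ℝ =>
      C₂.mulVec (gibbsDens βN Lα M U q p' • p' +
        βN⁻¹ • M.mulVec (vgrad (fun p'' => gibbsDens βN Lα M U q p'') p'))) = fun _ => 0 := by
    funext p'
    rw [vgrad_p βN Lα M hMi U q p']
    have h1 : M.mulVec ((-βN * gibbsDens βN Lα M U q p') • M⁻¹.mulVec p')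
        = (-βN * gibbsDens βN Lα M U q p') • p' := by
      rw [Matrix.mulVec_smul, Matrix.mulVec_mulVec, Matrix.mul_nonsing_inv _ hMdet,
        Matrix.one_mulVec]
    rw [h1, smul_smul]
    have : gibbsDens βN Lα M U q p' • p'
        + (βN⁻¹ * (-βN * gibbsDens βN Lα M U q p')) • p' = 0 := by
      rw [← add_smul]
      have hc : gibbsDens βN Lα M U q p' + βN⁻¹ * (-βN * gibbsDens βN Lα M U q p') = 0 := by
        field_simp
        ring
      rw [hc, zero_smul]
    rw [this, Matrix.mulVec_zero]
  have hrhs : vdiv (fun p' : Fin N → ℝ =>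
      C₂.mulVec (gibbsDens βN Lα M U q p' • p' +
        βN⁻¹ • M.mulVec (vgrad (fun p'' => gibbsDens βN Lα M U q p'') p'))) p = 0 := by
    rw [hflux]
    unfold vdiv
    simp [fderiv_const]
  rw [hrhs, mul_zero]
  -- LHS is zero by symmetry of C₁
  rw [vgrad_q βN Lα M hLαs U hU q p, vgrad_p βN Lα M hMi U q p]
  set c : ℝ := -βN * gibbsDens βN Lα M U q p
  set a : Fin N → ℝ := M⁻¹.mulVec p
  set b : Fin N → ℝ := Lα.mulVec q + vgrad U q
  have hsym : C₁.mulVec a ⬝ᵥ b = C₁.mulVec b ⬝ᵥ a := by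
    rw [dotProduct_comm, Matrix.dotProduct_mulVec]
    congr 1
    nth_rewrite 1 [← hC₁s.eq]
    exact Matrix.vecMul_transpose C₁ b
  rw [dotProduct_smul, dotProduct_smul, hsym]
  ring
end
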